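/- arXiv:1503.04057 — 2 statements merged into one kernel-verified Lean document; each statement's English description precedes it below -/
import Mathlib

section
/- Let ε > 0 and c > 0, and let p = (u,v,w,q) be a nonconstant solution of system (1) with lim_{t→−∞} p(t) = p₀ and such that q'(t) < 0 for all sufficiently negative t. If u' ≥ 0 on an interval (−∞, τ], then q' < 0 on (−∞, τ). -/
/-
Write `ψ = q - 1/(1 + β S(u))` for the distance of `q` from its nullcline, so that
`q' = -(ε/c)(1 + β S(u)) ψ`. Differentiating, `ψ' + (ε/c)(1 + β S(u)) ψ = β S'(u) u' / (1 + β S(u))²`,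
which is nonnegative while `u' ≥ 0`. With the integrating factor `exp ∫ (ε/c)(1 + β S(u))` this makes
`ψ` keep its sign forwards in time; `q' < 0` at very negative times means `ψ > 0` there, hence
`ψ > 0`, i.e. `q' < 0`, up to `τ`.
-/

open Filter Topology

noncomputable section

/-- `SolOne b β S ε c u v w q` : `p = (u,v,w,q)` solves system (1):
`u' = (v−u)/c, v' = w, w' = b²(v − q S(u)), q' = (ε/c)(1 − q − β q S(u))`. -/
def SolOne (b β : ℝ) (S : ℝ → ℝ) (ε c : ℝ) (u v w q : ℝ → ℝ) : Prop :=
  ∀ t : ℝ,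
    HasDerivAt u ((v t - u t) / c) t ∧
    HasDerivAt v (w t) t ∧
    HasDerivAt w (b ^ 2 * (v t - q t * S (u t))) t ∧
    HasDerivAt q (ε / c * (1 - q t - β * (q t * S (u t)))) t

/-- `SolFast b S q₀ c u v w` : `r = (u,v,w)` solves the fast system (2):
`u' = (v−u)/c, v' = w, w' = b²(v − q₀ S(u))`. -/
def SolFast (b : ℝ) (S : ℝ → ℝ) (q₀ c : ℝ) (u v w : ℝ → ℝ) : Prop :=
  ∀ t : ℝ,
    HasDerivAt u ((v t - u t) / c) t ∧
    HasDerivAt v (w t) t ∧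
    HasDerivAt w (b ^ 2 * (v t - q₀ * S (u t))) t

/-- `(u,v,w,q)` is a nonconstant curve. -/
def Nonconst4 (u v w q : ℝ → ℝ) : Prop :=
  ∃ t s : ℝ, (u t, v t, w t, q t) ≠ (u s, v s, w s, q s)

/-- `(u,v,w)` is a nonconstant curve. -/
def Nonconst3 (u v w : ℝ → ℝ) : Prop :=
  ∃ t s : ℝ, (u t, v t, w t) ≠ (u s, v s, w s)

/-- System (1) has a homoclinic orbit (travelling pulse) at speed `c`:
a nonconstant solution tending to `p₀ = (u₀,u₀,0,q₀)` at both `±∞`. -/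
def Homoclinic (b β : ℝ) (S : ℝ → ℝ) (ε c u₀ q₀ : ℝ) : Prop :=
  ∃ u v w q : ℝ → ℝ,
    SolOne b β S ε c u v w q ∧ Nonconst4 u v w q ∧
    Tendsto (fun t => (u t, v t, w t, q t)) atBot (𝓝 (u₀, u₀, 0, q₀)) ∧
    Tendsto (fun t => (u t, v t, w t, q t)) atTop (𝓝 (u₀, u₀, 0, q₀))

/-- `c₀` is a front speed: the fast system (2) at speed `c₀` has a nonconstant
solution from `(u₀,u₀,0)` at `−∞` to `(uP,uP,0)` at `+∞` with `w > 0` on `ℝ`. -/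
def FrontSpeed (b : ℝ) (S : ℝ → ℝ) (q₀ u₀ uP c₀ : ℝ) : Prop :=
  0 < c₀ ∧
  ∃ u v w : ℝ → ℝ,
    SolFast b S q₀ c₀ u v w ∧ Nonconst3 u v w ∧
    Tendsto (fun t => (u t, v t, w t)) atBot (𝓝 (u₀, u₀, 0)) ∧
    (∀ t : ℝ, 0 < w t) ∧
    Tendsto (fun t => (u t, v t, w t)) atTop (𝓝 (uP, uP, 0))

/-- Normalized fast solution at speed `c`: a nonconstant solution of (2) with
`r(−∞) = (u₀,u₀,0)`, `u(0) = u_m` and `w > 0` on `(−∞,0]`. -/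
def NormalizedFast (b : ℝ) (S : ℝ → ℝ) (q₀ u₀ uM c : ℝ) (u v w : ℝ → ℝ) : Prop :=
  SolFast b S q₀ c u v w ∧ Nonconst3 u v w ∧
  Tendsto (fun t => (u t, v t, w t)) atBot (𝓝 (u₀, u₀, 0)) ∧
  u 0 = uM ∧ (∀ t : ℝ, t ≤ 0 → 0 < w t)

theorem pos_of_hasDerivAt_of_deriv_add_mul_nonneg {f f' K : ℝ → ℝ} {s t : ℝ}
    (hK : Continuous K) (hf : ∀ x ∈ Set.Icc s t, HasDerivAt f (f' x) x)
    (hfK : ∀ x ∈ Set.Icc s t, 0 ≤ f' x + K x * f x) (hs : 0 < f s) (hst : s ≤ t) :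
    0 < f t := by
  set φ : ℝ → ℝ := fun x => f x * Real.exp (∫ y in s..x, K y)
  have hφ : ∀ x ∈ Set.Icc s t,
      HasDerivAt φ ((f' x + K x * f x) * Real.exp (∫ y in s..x, K y)) x := fun x hx =>
    ((hf x hx).mul (hK.integral_hasStrictDerivAt s x).hasDerivAt.exp).congr_deriv (by ring)
  have hmono : MonotoneOn φ (Set.Icc s t) := by
    refine monotoneOn_of_hasDerivWithinAt_nonneg (convex_Icc s t)
      (f' := fun x => (f' x + K x * f x) * Real.exp (∫ y in s..x, K y))
      (fun x hx => (hφ x hx).continuousAt.continuousWithinAt) (fun x hx => ?_) (fun x hx => ?_)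
    · exact (hφ x (interior_subset hx)).hasDerivWithinAt
    · exact mul_nonneg (hfK x (interior_subset hx)) (Real.exp_pos _).le
  have hφt : 0 < φ t := calc
    0 < φ s := by simpa [φ] using hs
    _ ≤ φ t := hmono (Set.left_mem_Icc.2 hst) (Set.right_mem_Icc.2 hst) hst
  exact (mul_pos_iff_of_pos_right (Real.exp_pos _)).1 hφt

def qNullcline (β : ℝ) (S : ℝ → ℝ) (x : ℝ) : ℝ := (1 + β * S x)⁻¹

section SystemOne

variable {β ε c : ℝ} {S u q : ℝ → ℝ} {t : ℝ}

theorem q_rhs_eq_mul_sub_qNullcline {x y : ℝ} (h : 1 + β * S x ≠ 0) :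
    ε / c * (1 - y - β * (y * S x)) = -(ε / c * (1 + β * S x) * (y - qNullcline β S x)) := by
  unfold qNullcline
  field_simp
  ring

theorem hasDerivAt_sub_qNullcline {u' : ℝ} (hS : DifferentiableAt ℝ S (u t))
    (hD : 1 + β * S (u t) ≠ 0) (hu : HasDerivAt u u' t)
    (hq : HasDerivAt q (ε / c * (1 - q t - β * (q t * S (u t)))) t) :
    HasDerivAt (fun t => q t - qNullcline β S (u t))
      (-(ε / c * (1 + β * S (u t)) * (q t - qNullcline β S (u t)))
        + β * deriv S (u t) * u' / (1 + β * S (u t)) ^ 2) t := by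
  have hDu : HasDerivAt (fun t => 1 + β * S (u t)) (β * (deriv S (u t) * u')) t :=
    ((hS.hasDerivAt.comp t hu).const_mul β).const_add 1
  refine (hq.sub (hDu.inv hD)).congr_deriv ?_
  rw [q_rhs_eq_mul_sub_qNullcline hD]
  ring

end SystemOne

theorem q_decreasing_while_u_nondecreasing_general
    (b β : ℝ) (S : ℝ → ℝ)
    (hβ : 0 < β)
    (hS : ContDiff ℝ 1 S)
    (hS' : ∀ x : ℝ, 0 < deriv S x)
    (hSpos : ∀ x : ℝ, 0 < S x)
    (ε c : ℝ) (hε : 0 < ε) (hc : 0 < c)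
    (u v w q : ℝ → ℝ) (hp : SolOne b β S ε c u v w q)
    (hq' : ∀ᶠ t in atBot, deriv q t < 0)
    (τ : ℝ) (hu' : ∀ t : ℝ, t ≤ τ → 0 ≤ deriv u t) :
    ∀ t : ℝ, t < τ → deriv q t < 0 := by
  have hD (x : ℝ) : 0 < 1 + β * S x := add_pos one_pos (mul_pos hβ (hSpos x))
  have hεc : 0 < ε / c := div_pos hε hc
  set ψ : ℝ → ℝ := fun t => q t - qNullcline β S (u t)
  set K : ℝ → ℝ := fun t => ε / c * (1 + β * S (u t))
  have hK : Continuous K := continuous_const.mul <| continuous_const.add <| continuous_const.mul <|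
    hS.continuous.comp <| continuous_iff_continuousAt.2 fun t => (hp t).1.continuousAt
  have hderiv_q (t : ℝ) : deriv q t = -(K t * ψ t) := by
    rw [(hp t).2.2.2.deriv, q_rhs_eq_mul_sub_qNullcline (hD _).ne']
  have hψ_pos_iff (t : ℝ) : 0 < ψ t ↔ deriv q t < 0 := by
    rw [hderiv_q, neg_lt_zero, mul_pos_iff_of_pos_left (mul_pos hεc (hD _))]
  intro t ht
  obtain ⟨s, hs⟩ := eventually_atBot.1 hq'
  refine (hψ_pos_iff t).1 <| pos_of_hasDerivAt_of_deriv_add_mul_nonneg hK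
    (fun x _ => hasDerivAt_sub_qNullcline ((hS.differentiable one_ne_zero) _) (hD _).ne'
      (hp x).1.differentiableAt.hasDerivAt (hp x).2.2.2)
    (fun x hx => ?_) ((hψ_pos_iff _).2 (hs _ (min_le_right t s))) (min_le_left t s)
  have hux : 0 ≤ deriv u x := hu' x (hx.2.trans ht.le)
  have hSx := hS' (u x)
  have hforcing : 0 ≤ β * deriv S (u x) * deriv u x / (1 + β * S (u x)) ^ 2 := by positivity
  simp only [K, ψ]
  linarith

/-- Lemma 7 of the paper. -/
theorem q_decreasing_while_u_nondecreasing
    (b β u₀ q₀ u_m uP u_knee : ℝ) (S : ℝ → ℝ)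
    (hb : 0 < b) (hβ : 0 < β)
    (hS : ContDiff ℝ 1 S)
    (hS' : ∀ x : ℝ, 0 < deriv S x)
    (hSpos : ∀ x : ℝ, 0 < S x) (hSlt : ∀ x : ℝ, S x < 1)
    -- (C1): unique equilibrium p₀ = (u₀,u₀,0,q₀)
    (hq₀ : q₀ = 1 / (1 + β * S u₀)) (hu₀ : u₀ = q₀ * S u₀)
    (hC1 : ∀ u q : ℝ, u = q * S u → q = 1 / (1 + β * S u) → u = u₀ ∧ q = q₀)
    -- (C2): h(u) = u/S(u) has one local max then one local min (at u_knee), no other critical points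
    (hC2 : ∃ u_max : ℝ, u_max < u_knee ∧ IsLocalMax (fun x : ℝ => x / S x) u_max ∧
      IsLocalMin (fun x : ℝ => x / S x) u_knee ∧
      ∀ x : ℝ, deriv (fun y : ℝ => y / S y) x = 0 → x = u_max ∨ x = u_knee)
    -- (C3): h(u) = q₀ has exactly three solutions u₀ < u_m < uP
    (hlt₁ : u₀ < u_m) (hlt₂ : u_m < uP)
    (hC3 : ∀ x : ℝ, x / S x = q₀ ↔ x = u₀ ∨ x = u_m ∨ x = uP)
    -- (C4)
    (hC4 : 0 < ∫ x in u₀..uP, (q₀ * S x - x))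
    (ε c : ℝ) (hε : 0 < ε) (hc : 0 < c)
    (u v w q : ℝ → ℝ) (hp : SolOne b β S ε c u v w q)
    (hnc : Nonconst4 u v w q)
    (hlim : Tendsto (fun t => (u t, v t, w t, q t)) atBot (𝓝 (u₀, u₀, 0, q₀)))
    (hq' : ∀ᶠ t in atBot, deriv q t < 0)
    (τ : ℝ) (hu' : ∀ t : ℝ, t ≤ τ → 0 ≤ deriv u t) :
    ∀ t : ℝ, t < τ → deriv q t < 0 :=
  q_decreasing_while_u_nondecreasing_general b β S hβ hS hS' hSpos ε c hε hc u v w q hp hq' τ hu'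
end
end

section
/- Let c > 0 and w̄ > 0, and let u, v, w : ℝ → ℝ be differentiable functions satisfying u' = (v−u)/c and v' = w, with lim_{t→−∞} (v(t) − u(t)) = 0. If 0 < w ≤ w̄ on an interval (−∞, τ], then 0 < v − u < c·w̄ on (−∞, τ]. If instead |w| ≤ w̄ on an interval (−∞, σ], then |v − u| < c·w̄ on (−∞, σ]. -/
/-!
With `g = v - u` one has `g' = w - g / c`, hence `(exp (t / c) * g t)' = exp (t / c) * w t`: on
`(-∞, τ]` the sign of the forcing `w` decides whether `exp (t / c) * g t` increases. For `w > 0`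
it increases strictly from its limit `0` at `-∞`, so `g > 0`. For `w ≤ w̄` the same applies to
`c * w̄ - g`, which is forced by `w̄ - w ≥ 0` and is positive near `-∞` because `g → 0`; this gives
`g < c * w̄`, and `g > -c * w̄` follows from the symmetry `(g, w) ↦ (-g, -w)`.
-/

open Filter Topology Set

lemma MonotoneOn.le_of_tendsto_atBot {f : ℝ → ℝ} {τ t L : ℝ} (hf : MonotoneOn f (Iic τ))
    (hlim : Tendsto f atBot (𝓝 L)) (ht : t ≤ τ) : L ≤ f t :=
  le_of_tendsto hlim (eventually_atBot.2 ⟨t, fun _ hs => hf (hs.trans ht) ht hs⟩)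

lemma MonotoneOn.pos_of_eventually_pos {f : ℝ → ℝ} {τ t : ℝ} (hf : MonotoneOn f (Iic τ))
    (hev : ∀ᶠ s in atBot, 0 < f s) (ht : t ≤ τ) : 0 < f t := by
  obtain ⟨s, hs⟩ := (hev.and (eventually_le_atBot t)).exists
  exact hs.1.trans_le (hf (hs.2.trans ht) ht hs.2)

section Relaxation

variable {c τ t : ℝ} {g w : ℝ → ℝ}

lemma hasDerivAt_exp_div_mul (hc : c ≠ 0) (hg : HasDerivAt g (w t - g t / c) t) :
    HasDerivAt (fun s => Real.exp (s / c) * g s) (Real.exp (t / c) * w t) t := by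
  have hexp : HasDerivAt (fun s => Real.exp (s / c)) (Real.exp (t / c) / c) t := by
    simpa [div_eq_mul_inv] using ((hasDerivAt_id t).div_const c).exp
  exact (hexp.mul hg).congr_deriv (by field_simp; ring)

lemma pos_of_forcing_nonneg (hc : c ≠ 0) (hg : ∀ t, HasDerivAt g (w t - g t / c) t)
    (hw : ∀ s ≤ τ, 0 ≤ w s) (hev : ∀ᶠ s in atBot, 0 < g s) (ht : t ≤ τ) : 0 < g t := by
  have hmono : MonotoneOn (fun s => Real.exp (s / c) * g s) (Iic τ) := by
    refine monotoneOn_of_hasDerivWithinAt_nonneg (convex_Iic τ)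
      (fun s _ => (hasDerivAt_exp_div_mul hc (hg s)).continuousAt.continuousWithinAt)
      (fun s _ => (hasDerivAt_exp_div_mul hc (hg s)).hasDerivWithinAt) fun s hs => ?_
    rw [interior_Iic] at hs
    exact mul_nonneg (Real.exp_pos _).le (hw s (le_of_lt hs))
  have hpos := hmono.pos_of_eventually_pos
    (hev.mono fun s hs => mul_pos (Real.exp_pos (s / c)) hs) ht
  exact pos_of_mul_pos_right hpos (Real.exp_pos _).le

lemma pos_of_forcing_pos (hc : 0 < c) (hg : ∀ t, HasDerivAt g (w t - g t / c) t)
    (hw : ∀ s ≤ τ, 0 < w s) (hlim : Tendsto g atBot (𝓝 0)) (ht : t ≤ τ) : 0 < g t := by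
  have hmono : StrictMonoOn (fun s => Real.exp (s / c) * g s) (Iic τ) := by
    refine strictMonoOn_of_hasDerivWithinAt_pos (convex_Iic τ)
      (fun s _ => (hasDerivAt_exp_div_mul hc.ne' (hg s)).continuousAt.continuousWithinAt)
      (fun s _ => (hasDerivAt_exp_div_mul hc.ne' (hg s)).hasDerivWithinAt) fun s hs => ?_
    rw [interior_Iic] at hs
    exact mul_pos (Real.exp_pos _) (hw s (le_of_lt hs))
  have hexp : Tendsto (fun s => Real.exp (s / c)) atBot (𝓝 0) :=
    Real.tendsto_exp_atBot.comp (tendsto_id.atBot_div_const hc)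
  have hnonneg : 0 ≤ Real.exp ((t - 1) / c) * g (t - 1) :=
    hmono.monotoneOn.le_of_tendsto_atBot (by simpa using hexp.mul hlim) (by linarith)
  have hpos : 0 < Real.exp (t / c) * g t :=
    hnonneg.trans_lt (hmono (by simp; linarith) (mem_Iic.2 ht) (by linarith))
  exact pos_of_mul_pos_right hpos (Real.exp_pos _).le

lemma lt_of_forcing_le {a : ℝ} (hc : c ≠ 0) (hg : ∀ t, HasDerivAt g (w t - g t / c) t)
    (hw : ∀ s ≤ τ, w s ≤ a) (hev : ∀ᶠ s in atBot, g s < c * a) (ht : t ≤ τ) : g t < c * a := by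
  have hg' : ∀ t, HasDerivAt (fun s => c * a - g s) (a - w t - (c * a - g t) / c) t :=
    fun t => ((hg t).const_sub (c * a)).congr_deriv (by field_simp; ring)
  exact sub_pos.1 <| pos_of_forcing_nonneg (g := fun s => c * a - g s) hc hg'
    (fun s hs => sub_nonneg.2 (hw s hs)) (hev.mono fun _ => sub_pos.2) ht

lemma neg_lt_of_neg_le_forcing {a : ℝ} (hc : c ≠ 0) (hg : ∀ t, HasDerivAt g (w t - g t / c) t)
    (hw : ∀ s ≤ τ, -a ≤ w s) (hev : ∀ᶠ s in atBot, -(c * a) < g s) (ht : t ≤ τ) :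
    -(c * a) < g t := by
  have hg' : ∀ t, HasDerivAt (fun s => -g s) (-w t - -g t / c) t :=
    fun t => (hg t).neg.congr_deriv (by ring)
  exact neg_lt.1 <| lt_of_forcing_le (g := fun s => -g s) hc hg'
    (fun s hs => neg_le.1 (hw s hs)) (hev.mono fun _ => neg_lt.1) ht

end Relaxation

/-- Lemma 15 of the paper: comparison estimate for `v − u`. -/
theorem v_sub_u_estimate (c wbar : ℝ) (hc : 0 < c) (hwbar : 0 < wbar)
    (u v w : ℝ → ℝ)
    (hu : ∀ t : ℝ, HasDerivAt u ((v t - u t) / c) t)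
    (hv : ∀ t : ℝ, HasDerivAt v (w t) t)
    (hlim : Tendsto (fun t => v t - u t) atBot (𝓝 0)) :
    (∀ τ : ℝ, (∀ t : ℝ, t ≤ τ → 0 < w t ∧ w t ≤ wbar) →
      ∀ t : ℝ, t ≤ τ → 0 < v t - u t ∧ v t - u t < c * wbar) ∧
    (∀ σ : ℝ, (∀ t : ℝ, t ≤ σ → |w t| ≤ wbar) →
      ∀ t : ℝ, t ≤ σ → |v t - u t| < c * wbar) := by
  set g : ℝ → ℝ := fun s => v s - u s
  have hg : ∀ t, HasDerivAt g (w t - g t / c) t := fun t => (hv t).sub (hu t)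
  have hcw : 0 < c * wbar := mul_pos hc hwbar
  have hlt : ∀ᶠ s in atBot, g s < c * wbar := hlim.eventually (gt_mem_nhds hcw)
  have hgt : ∀ᶠ s in atBot, -(c * wbar) < g s := hlim.eventually (lt_mem_nhds (by linarith))
  refine ⟨fun τ hw t ht => ⟨?_, ?_⟩, fun σ hw t ht => abs_lt.2 ⟨?_, ?_⟩⟩
  · exact pos_of_forcing_pos (g := g) hc hg (fun s hs => (hw s hs).1) hlim ht
  · exact lt_of_forcing_le (g := g) hc.ne' hg (fun s hs => (hw s hs).2) hlt ht
  · exact neg_lt_of_neg_le_forcing (g := g) hc.ne' hg (fun s hs => (abs_le.1 (hw s hs)).1) hgt ht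
  · exact lt_of_forcing_le (g := g) hc.ne' hg (fun s hs => (abs_le.1 (hw s hs)).2) hlt ht
end
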